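/- Let f = h + conj(g) be a sense-preserving harmonic mapping on the unit disk D with β(f) < ∞, let c₀ = g'(0)/h'(0), and write aₙ = h⁽ⁿ⁾(0)/n!, bₙ = g⁽ⁿ⁾(0)/n!. Then for every n ≥ 2 and every r ∈ (0,1): max{ |aₙ|, |bₙ| } ≤ β(f)·(1+|c₀|·r) / ( n·r^{n−1}·(1−r²)^{3/2}·√(1−|c₀|²) ). -/

import Mathlib

open Metric Set Filter

/-- Jacobian of the harmonic mapping `f = h + conj g`. -/
noncomputable def jacobian (h g : ℂ → ℂ) (z : ℂ) : ℝ :=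
  ‖deriv h z‖ ^ 2 - ‖deriv g z‖ ^ 2

/-- The Bloch-type seminorm `β(f) = sup_{z ∈ 𝔻} (1 - |z|²) √|J_f(z)|`. -/
noncomputable def betaH (h g : ℂ → ℂ) : ℝ :=
  sSup ((fun z => (1 - ‖z‖ ^ 2) * Real.sqrt |jacobian h g z|) '' Metric.ball 0 1)

/-- Membership in the Bloch-type class `B_H`, i.e. `β(f) < ∞`. -/
def InBH (h g : ℂ → ℂ) : Prop :=
  BddAbove ((fun z => (1 - ‖z‖ ^ 2) * Real.sqrt |jacobian h g z|) '' Metric.ball 0 1)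

/-!
On the circle `|z| = r`, the definition of `β(f)` bounds `(1 - r²) |h'(z)| √(1 - |ω(z)|²)`,
and the Schwarz–Pick lemma for the dilatation `ω = g'/h'` bounds `1 - |ω(z)|²` from below by
`(1 - r²)(1 - |c₀|²) / (1 + |c₀| r)²`. Hence on that circle
`|g'| < |h'| ≤ β(f)(1 + |c₀| r) / ((1 - r²)^{3/2} √(1 - |c₀|²))`,
and Cauchy's estimate for `h'` and `g'` bounds `n aₙ = h'^{(n-1)}(0)/(n-1)!` and `n bₙ`.
-/

open Complex ComplexConjugate

lemma sq_norm_one_sub_conj_mul_sub_sq_norm_sub (c w : ℂ) :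
    ‖1 - conj c * w‖ ^ 2 - ‖c - w‖ ^ 2 = (1 - ‖c‖ ^ 2) * (1 - ‖w‖ ^ 2) := by
  simp only [Complex.sq_norm, normSq_apply, sub_re, sub_im, mul_re, mul_im, conj_re, conj_im,
    one_re, one_im]
  ring

lemma norm_sub_lt_norm_one_sub_conj_mul {c w : ℂ} (hc : ‖c‖ < 1) (hw : ‖w‖ < 1) :
    ‖c - w‖ < ‖1 - conj c * w‖ := by
  have key := sq_norm_one_sub_conj_mul_sub_sq_norm_sub c w
  have : 0 < (1 - ‖c‖ ^ 2) * (1 - ‖w‖ ^ 2) := by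
    apply mul_pos <;> nlinarith [norm_nonneg c, norm_nonneg w]
  exact lt_of_pow_lt_pow_left₀ 2 (norm_nonneg _) (by linarith)

lemma one_sub_conj_mul_ne_zero {c w : ℂ} (hc : ‖c‖ < 1) (hw : ‖w‖ < 1) :
    1 - conj c * w ≠ 0 :=
  norm_pos_iff.mp ((norm_nonneg _).trans_lt (norm_sub_lt_norm_one_sub_conj_mul hc hw))

/-- The Schwarz–Pick lemma. -/
lemma one_sub_sq_mul_one_sub_sq_le_of_mapsTo_ball {ω : ℂ → ℂ}
    (hd : DifferentiableOn ℂ ω (ball 0 1)) (hmaps : MapsTo ω (ball 0 1) (ball 0 1))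
    {z : ℂ} (hz : z ∈ ball (0 : ℂ) 1) :
    (1 - ‖z‖ ^ 2) * (1 - ‖ω 0‖ ^ 2) ≤ (1 + ‖ω 0‖ * ‖z‖) ^ 2 * (1 - ‖ω z‖ ^ 2) := by
  set c := ω 0
  have hc : ‖c‖ < 1 := mem_ball_zero_iff.mp (hmaps (mem_ball_self one_pos))
  have hω : ∀ w ∈ ball (0 : ℂ) 1, ‖ω w‖ < 1 := fun w hw => mem_ball_zero_iff.mp (hmaps hw)
  -- `ψ` is `ω` followed by the disc automorphism exchanging `c` and `0`.
  set ψ : ℂ → ℂ := fun w => (c - ω w) / (1 - conj c * ω w)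
  have hψ_maps : MapsTo ψ (ball 0 1) (closedBall 0 1) := fun w hw => by
    have hlt := norm_sub_lt_norm_one_sub_conj_mul hc (hω w hw)
    rw [mem_closedBall_zero_iff, norm_div]
    exact div_le_one_of_le₀ hlt.le (norm_nonneg _)
  have hψ_diff : DifferentiableOn ℂ ψ (ball 0 1) :=
    ((differentiableOn_const c).sub hd).div ((differentiableOn_const 1).sub
      ((differentiableOn_const _).mul hd)) fun w hw => one_sub_conj_mul_ne_zero hc (hω w hw)
  have hψz : ‖ψ z‖ ≤ ‖z‖ :=
    norm_le_norm_of_mapsTo_ball hψ_diff hψ_maps (by simp [ψ, c]) (mem_ball_zero_iff.mp hz)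
  -- the automorphism is an involution, so `ω z` is recovered from `ψ z`
  have hinv : ω z * (1 - conj c * ψ z) = c - ψ z := by
    have hne := one_sub_conj_mul_ne_zero hc (hω z hz)
    simp only [ψ]
    rw [mul_comm] at hne
    field_simp
    ring
  have hid : ‖1 - conj c * ψ z‖ ^ 2 * (1 - ‖ω z‖ ^ 2) = (1 - ‖c‖ ^ 2) * (1 - ‖ψ z‖ ^ 2) := by
    rw [← sq_norm_one_sub_conj_mul_sub_sq_norm_sub, ← hinv, norm_mul]
    ring
  have hden : ‖1 - conj c * ψ z‖ ≤ 1 + ‖c‖ * ‖z‖ :=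
    calc ‖1 - conj c * ψ z‖ ≤ 1 + ‖c‖ * ‖ψ z‖ := by
          simpa [norm_mul] using norm_sub_le (1 : ℂ) (conj c * ψ z)
      _ ≤ 1 + ‖c‖ * ‖z‖ := by gcongr
  have hωz : 0 ≤ 1 - ‖ω z‖ ^ 2 := by nlinarith [hω z hz, norm_nonneg (ω z)]
  calc (1 - ‖z‖ ^ 2) * (1 - ‖c‖ ^ 2) ≤ (1 - ‖ψ z‖ ^ 2) * (1 - ‖c‖ ^ 2) := by
        gcongr
        · nlinarith [norm_nonneg c]
      _ = ‖1 - conj c * ψ z‖ ^ 2 * (1 - ‖ω z‖ ^ 2) := by rw [hid]; ring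
      _ ≤ (1 + ‖c‖ * ‖z‖) ^ 2 * (1 - ‖ω z‖ ^ 2) := by gcongr

lemma Real.rpow_three_halves {x : ℝ} (hx : 0 ≤ x) : x ^ ((3 : ℝ) / 2) = x * √x := by
  rw [show (3 : ℝ) / 2 = 1 + 1 / 2 by norm_num, Real.rpow_add' hx (by norm_num), Real.rpow_one,
    Real.sqrt_eq_rpow]

lemma norm_iteratedDeriv_succ_div_factorial_le {f : ℂ → ℂ} {c : ℂ} {R r M : ℝ}
    (hf : DifferentiableOn ℂ f (ball c R)) (hr : 0 < r) (hrR : r < R)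
    (hM : ∀ z ∈ sphere c r, ‖deriv f z‖ ≤ M) (m : ℕ) :
    ‖iteratedDeriv (m + 1) f c / ((m + 1).factorial : ℂ)‖ ≤ M / ((m + 1) * r ^ m) := by
  have hcauchy := norm_iteratedDeriv_le_of_forall_mem_sphere_norm_le m hr
    ((hf.deriv isOpen_ball).diffContOnCl_ball (closedBall_subset_ball hrR)) hM
  rw [iteratedDeriv_succ', norm_div, Complex.norm_natCast, Nat.factorial_succ, Nat.cast_mul,
    div_le_div_iff₀ (by positivity) (by positivity)]
  calc ‖iteratedDeriv m (deriv f) c‖ * ((m + 1) * r ^ m)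
      ≤ m.factorial * M / r ^ m * ((m + 1) * r ^ m) := by gcongr
    _ = M * ((m + 1 : ℕ) * m.factorial) := by field_simp; push_cast; ring

noncomputable def dilatation (h g : ℂ → ℂ) (z : ℂ) : ℂ :=
  deriv g z / deriv h z

section SensePreserving

variable {h g : ℂ → ℂ} (hh : DifferentiableOn ℂ h (ball 0 1))
  (hg : DifferentiableOn ℂ g (ball 0 1))
  (hsp : ∀ z ∈ ball (0 : ℂ) 1, ‖deriv g z‖ < ‖deriv h z‖)
include hsp

lemma deriv_ne_zero_of_sensePreserving {z : ℂ} (hz : z ∈ ball (0 : ℂ) 1) : deriv h z ≠ 0 :=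
  norm_pos_iff.mp ((norm_nonneg _).trans_lt (hsp z hz))

lemma mapsTo_dilatation : MapsTo (dilatation h g) (ball 0 1) (ball 0 1) := fun z hz => by
  rw [mem_ball_zero_iff, dilatation, norm_div]
  exact (div_lt_one (norm_pos_iff.mpr (deriv_ne_zero_of_sensePreserving hsp hz))).mpr (hsp z hz)

include hh hg in
lemma differentiableOn_dilatation : DifferentiableOn ℂ (dilatation h g) (ball 0 1) :=
  (hg.deriv isOpen_ball).div (hh.deriv isOpen_ball) fun _ hz =>
    deriv_ne_zero_of_sensePreserving hsp hz

lemma sqrt_abs_jacobian_eq {z : ℂ} (hz : z ∈ ball (0 : ℂ) 1) :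
    √|jacobian h g z| = ‖deriv h z‖ * √(1 - ‖dilatation h g z‖ ^ 2) := by
  have hne := deriv_ne_zero_of_sensePreserving hsp hz
  have hjac : jacobian h g z = ‖deriv h z‖ ^ 2 * (1 - ‖dilatation h g z‖ ^ 2) := by
    rw [jacobian, dilatation, norm_div]
    field_simp
  have hω : 0 ≤ 1 - ‖dilatation h g z‖ ^ 2 := by
    nlinarith [mem_ball_zero_iff.mp (mapsTo_dilatation hsp hz), norm_nonneg (dilatation h g z)]
  rw [hjac, abs_of_nonneg (by positivity), Real.sqrt_mul (sq_nonneg _),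
    Real.sqrt_sq (norm_nonneg _)]

include hh hg in
lemma norm_deriv_le_of_inBH (hβ : InBH h g) {z : ℂ} (hz : z ∈ ball (0 : ℂ) 1) :
    ‖deriv h z‖ ≤ betaH h g * (1 + ‖dilatation h g 0‖ * ‖z‖)
      / ((1 - ‖z‖ ^ 2) ^ ((3 : ℝ) / 2) * √(1 - ‖dilatation h g 0‖ ^ 2)) := by
  set a := ‖dilatation h g 0‖
  set x := ‖dilatation h g z‖
  have hz1 : ‖z‖ < 1 := mem_ball_zero_iff.mp hz
  have ha1 : a < 1 := mem_ball_zero_iff.mp (mapsTo_dilatation hsp (mem_ball_self one_pos))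
  have hs : 0 < 1 - ‖z‖ ^ 2 := by nlinarith [norm_nonneg z]
  have ha : 0 < 1 - a ^ 2 := by nlinarith [norm_nonneg (dilatation h g 0)]
  have hβz : (1 - ‖z‖ ^ 2) * (‖deriv h z‖ * √(1 - x ^ 2)) ≤ betaH h g := by
    rw [← sqrt_abs_jacobian_eq hsp hz]
    exact le_csSup hβ (mem_image_of_mem _ hz)
  have hpick : √(1 - ‖z‖ ^ 2) * √(1 - a ^ 2) ≤ (1 + a * ‖z‖) * √(1 - x ^ 2) := by
    rw [← Real.sqrt_mul hs.le, ← Real.sqrt_sq (by positivity : 0 ≤ 1 + a * ‖z‖),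
      ← Real.sqrt_mul (sq_nonneg _)]
    exact Real.sqrt_le_sqrt (one_sub_sq_mul_one_sub_sq_le_of_mapsTo_ball
      (differentiableOn_dilatation hh hg hsp) (mapsTo_dilatation hsp) hz)
  rw [le_div_iff₀ (by positivity), Real.rpow_three_halves hs.le]
  calc ‖deriv h z‖ * ((1 - ‖z‖ ^ 2) * √(1 - ‖z‖ ^ 2) * √(1 - a ^ 2))
      = ‖deriv h z‖ * (1 - ‖z‖ ^ 2) * (√(1 - ‖z‖ ^ 2) * √(1 - a ^ 2)) := by ring
    _ ≤ ‖deriv h z‖ * (1 - ‖z‖ ^ 2) * ((1 + a * ‖z‖) * √(1 - x ^ 2)) := by gcongr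
    _ = (1 - ‖z‖ ^ 2) * (‖deriv h z‖ * √(1 - x ^ 2)) * (1 + a * ‖z‖) := by ring
    _ ≤ betaH h g * (1 + a * ‖z‖) := by gcongr

end SensePreserving

/-- **Coefficient estimates in `B_H`, parametric form.**  If `f = h + conj g` is
sense-preserving with `β(f) < ∞`, `c₀ = g'(0)/h'(0)`, `aₙ = h⁽ⁿ⁾(0)/n!`, `bₙ = g⁽ⁿ⁾(0)/n!`,
then for every `n ≥ 2` and every `r ∈ (0,1)`:
`max{|aₙ|, |bₙ|} ≤ β(f)·(1+|c₀|r)/(n·r^{n-1}·(1-r²)^{3/2}·√(1-|c₀|²))`. -/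
theorem coefficient_estimates_BH_parametric (h g : ℂ → ℂ) (c₀ : ℂ)
    (hh : DifferentiableOn ℂ h (Metric.ball 0 1))
    (hg : DifferentiableOn ℂ g (Metric.ball 0 1))
    (hsp : ∀ z ∈ Metric.ball (0 : ℂ) 1, ‖deriv g z‖ < ‖deriv h z‖)
    (hβ : InBH h g) (hc₀ : c₀ = deriv g 0 / deriv h 0) :
    ∀ n : ℕ, 2 ≤ n → ∀ r ∈ Set.Ioo (0 : ℝ) 1,
      max (‖iteratedDeriv n h 0 / (n.factorial : ℂ)‖)
          (‖iteratedDeriv n g 0 / (n.factorial : ℂ)‖)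
        ≤ betaH h g * (1 + ‖c₀‖ * r)
            / ((n : ℝ) * r ^ (n - 1) * (1 - r ^ 2) ^ ((3 : ℝ) / 2)
                * Real.sqrt (1 - ‖c₀‖ ^ 2)) := by
  rintro n hn r ⟨hr0, hr1⟩
  replace hc₀ : c₀ = dilatation h g 0 := hc₀
  obtain ⟨m, rfl⟩ : ∃ m, n = m + 1 := ⟨n - 1, by omega⟩
  set M := betaH h g * (1 + ‖c₀‖ * r) / ((1 - r ^ 2) ^ ((3 : ℝ) / 2) * √(1 - ‖c₀‖ ^ 2))
  have hbound_h : ∀ z ∈ sphere (0 : ℂ) r, ‖deriv h z‖ ≤ M := fun z hz => by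
    have hz_norm : ‖z‖ = r := mem_sphere_zero_iff_norm.mp hz
    have := norm_deriv_le_of_inBH hh hg hsp hβ (mem_ball_zero_iff.mpr (hz_norm ▸ hr1))
    rwa [hz_norm, ← hc₀] at this
  have hbound_g : ∀ z ∈ sphere (0 : ℂ) r, ‖deriv g z‖ ≤ M := fun z hz =>
    (hsp z (sphere_subset_ball hr1 hz)).le.trans (hbound_h z hz)
  have hM_eq : M / ((m + 1) * r ^ m) = betaH h g * (1 + ‖c₀‖ * r)
      / (((m + 1 : ℕ) : ℝ) * r ^ (m + 1 - 1) * (1 - r ^ 2) ^ ((3 : ℝ) / 2)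
        * Real.sqrt (1 - ‖c₀‖ ^ 2)) := by
    rw [Nat.add_sub_cancel, div_div]
    push_cast
    ring_nf
  rw [← hM_eq]
  exact max_le (norm_iteratedDeriv_succ_div_factorial_le hh hr0 hr1 hbound_h m)
    (norm_iteratedDeriv_succ_div_factorial_le hg hr0 hr1 hbound_g m)
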